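/- Let G be a triangle-free graph, v a vertex, G₀ = G − v − N(v), and let c be uniform on the proper k-colorings of G − v. Conditioned on the restriction of c to G₀ being c₀, the colors c(u) for u ∈ N(v) are conditionally independent, with c(u) uniformly distributed on L_{c₀}(u). -/

import Mathlib

/-! Fix `c₀` on `G₀`. A coloring of `G - v` extending `c₀` is determined by its values on `N(v)`,
and since `N(v)` is independent in a triangle-free graph, choosing for each `u ∈ N(v)` any color
of `L_{c₀}(u)` yields a proper coloring. So the extensions of `c₀` are in bijection with
`∏_{u ∈ N(v)} L_{c₀}(u)`, and those agreeing with `f` on `N(v)` form one point of this product,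
or none if some `f u ∉ L_{c₀}(u)`. -/

/-- The finset of proper `k`-colorings of a simple graph on a finite vertex type. -/
def properColorings {W : Type} [Fintype W] [DecidableEq W] (G : SimpleGraph W)
    [DecidableRel G.Adj] (k : ℕ) : Finset (W → Fin k) :=
  Finset.univ.filter fun c => ∀ u w, G.Adj u w → c u ≠ c w

/-- The graph obtained from `G` by deleting the vertex `v`. -/
def deleteVertex {V : Type} (G : SimpleGraph V) (v : V) : SimpleGraph {u : V // u ≠ v} where
  Adj a b := G.Adj a b
  symm := ⟨fun _ _ h => G.adj_symm h⟩
  loopless := ⟨fun a h => G.irrefl h⟩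

instance {V : Type} (G : SimpleGraph V) [DecidableRel G.Adj] (v : V) :
    DecidableRel (deleteVertex G v).Adj :=
  fun a b => inferInstanceAs (Decidable (G.Adj a b))

/-- The graph `G₀ = G - v - N(v)`. -/
def deleteClosedNbhd {V : Type} (G : SimpleGraph V) (v : V) :
    SimpleGraph {w : V // w ≠ v ∧ ¬G.Adj v w} where
  Adj a b := G.Adj a b
  symm := ⟨fun _ _ h => G.adj_symm h⟩
  loopless := ⟨fun a h => G.irrefl h⟩

instance {V : Type} (G : SimpleGraph V) [DecidableRel G.Adj] (v : V) :
    DecidableRel (deleteClosedNbhd G v).Adj :=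
  fun a b => inferInstanceAs (Decidable (G.Adj a b))

/-- Colors in `[k]` not used by a coloring `c₀` of `G₀` on the `G₀`-neighbors of `u`. -/
def availColors₀ {V : Type} [Fintype V] [DecidableEq V] (G : SimpleGraph V)
    [DecidableRel G.Adj] (v u : V) {k : ℕ}
    (c₀ : {w : V // w ≠ v ∧ ¬G.Adj v w} → Fin k) : Finset (Fin k) :=
  Finset.univ.filter fun j =>
    ∀ (w : V) (h1 : w ≠ v) (h2 : ¬G.Adj v w), G.Adj u w → c₀ ⟨w, h1, h2⟩ ≠ j

open Finset

theorem ite_forall_div_prod_eq_prod_ite {ι K : Type*} [Semifield K] (s : Finset ι)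
    (p : ι → Prop) [DecidablePred p] (a : ι → K) :
    (if ∀ i ∈ s, p i then 1 else 0) / ∏ i ∈ s, a i = ∏ i ∈ s, if p i then 1 / a i else 0 := by
  rw [← prod_boole, ← prod_div_distrib]
  refine prod_congr rfl fun i _ => ?_
  split_ifs <;> simp

section Extension

variable {V : Type} (G : SimpleGraph V) [DecidableRel G.Adj] {v : V} {k : ℕ}

def extendToNeighbors (c₀ : {w : V // w ≠ v ∧ ¬G.Adj v w} → Fin k)
    (p : {u : {w : V // w ≠ v} // G.Adj v u} → Fin k) : {w : V // w ≠ v} → Fin k :=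
  fun w => if h : G.Adj v w then p ⟨w, h⟩ else c₀ ⟨w, w.2, h⟩

variable {G} {c₀ : {w : V // w ≠ v ∧ ¬G.Adj v w} → Fin k}

theorem extendToNeighbors_of_adj (p : {u : {w : V // w ≠ v} // G.Adj v u} → Fin k)
    {w : {w : V // w ≠ v}} (h : G.Adj v w) : extendToNeighbors G c₀ p w = p ⟨w, h⟩ :=
  dif_pos h

theorem extendToNeighbors_of_not_adj (p : {u : {w : V // w ≠ v} // G.Adj v u} → Fin k)
    {w : {w : V // w ≠ v}} (h : ¬G.Adj v w) : extendToNeighbors G c₀ p w = c₀ ⟨w, w.2, h⟩ :=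
  dif_neg h

theorem extendToNeighbors_injective : Function.Injective (extendToNeighbors G c₀) := by
  intro p q hpq
  funext u
  simpa only [extendToNeighbors_of_adj _ u.2] using congrFun hpq u

variable (G v) [Fintype V] [DecidableEq V]

def coloringsExtending (c₀ : {w : V // w ≠ v ∧ ¬G.Adj v w} → Fin k) :
    Finset ({w : V // w ≠ v} → Fin k) :=
  (properColorings (deleteVertex G v) k).filter fun c =>
    ∀ (w : V) (h1 : w ≠ v) (h2 : ¬G.Adj v w), c ⟨w, h1⟩ = c₀ ⟨w, h1, h2⟩

variable {G v}

theorem eq_extendToNeighbors_of_mem {c : {w : V // w ≠ v} → Fin k}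
    (hc : c ∈ coloringsExtending G v c₀) : c = extendToNeighbors G c₀ fun u => c u := by
  funext w
  by_cases h : G.Adj v w
  · rw [extendToNeighbors_of_adj _ h]
  · rw [extendToNeighbors_of_not_adj _ h, ← (mem_filter.mp hc).2 w w.2 h]

theorem extendToNeighbors_ne_of_adj {p : {u : {w : V // w ≠ v} // G.Adj v u} → Fin k}
    {a b : {w : V // w ≠ v}} (ha : G.Adj v a) (hb : ¬G.Adj v b) (hab : G.Adj a b)
    (hp : p ⟨a, ha⟩ ∈ availColors₀ G v a c₀) :
    extendToNeighbors G c₀ p a ≠ extendToNeighbors G c₀ p b := by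
  rw [extendToNeighbors_of_adj _ ha, extendToNeighbors_of_not_adj _ hb]
  exact fun h => (mem_filter.mp hp).2 b b.2 hb hab h.symm

theorem extendToNeighbors_mem_iff (hG : G.CliqueFree 3)
    (hc₀ : c₀ ∈ properColorings (deleteClosedNbhd G v) k)
    (p : {u : {w : V // w ≠ v} // G.Adj v u} → Fin k) :
    extendToNeighbors G c₀ p ∈ coloringsExtending G v c₀ ↔
      ∀ u, p u ∈ availColors₀ G v u.1.1 c₀ := by
  simp only [coloringsExtending, properColorings, mem_filter, mem_univ, true_and]
  constructor
  · rintro ⟨hproper, -⟩ ⟨u, hu⟩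
    simp only [availColors₀, mem_filter, mem_univ, true_and]
    intro w hwv hvw huw
    have := hproper u ⟨w, hwv⟩ huw
    rw [extendToNeighbors_of_adj _ hu, extendToNeighbors_of_not_adj _ hvw] at this
    exact this.symm
  · intro hp
    refine ⟨fun a b hab => ?_, fun w hwv hvw => extendToNeighbors_of_not_adj _ hvw⟩
    by_cases ha : G.Adj v a <;> by_cases hb : G.Adj v b
    · exact absurd hab (G.isIndepSet_neighborSet_of_triangleFree hG v ha hb (G.ne_of_adj hab))
    · exact extendToNeighbors_ne_of_adj ha hb hab (hp _)
    · exact (extendToNeighbors_ne_of_adj hb ha hab.symm (hp _)).symm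
    · rw [extendToNeighbors_of_not_adj _ ha, extendToNeighbors_of_not_adj _ hb]
      exact (mem_filter.mp hc₀).2 _ _ hab

theorem coloringsExtending_eq_image (hG : G.CliqueFree 3)
    (hc₀ : c₀ ∈ properColorings (deleteClosedNbhd G v) k) :
    coloringsExtending G v c₀ =
      (Fintype.piFinset fun u => availColors₀ G v u.1.1 c₀).image (extendToNeighbors G c₀) := by
  ext c
  simp only [mem_image, Fintype.mem_piFinset]
  constructor
  · intro hc
    have hc_eq := eq_extendToNeighbors_of_mem hc
    exact ⟨_, (extendToNeighbors_mem_iff hG hc₀ _).mp (hc_eq ▸ hc), hc_eq.symm⟩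
  · rintro ⟨p, hp, rfl⟩
    exact (extendToNeighbors_mem_iff hG hc₀ p).mpr hp

theorem card_coloringsExtending (hG : G.CliqueFree 3)
    (hc₀ : c₀ ∈ properColorings (deleteClosedNbhd G v) k) :
    #(coloringsExtending G v c₀) =
      ∏ u ∈ univ.filter (fun u : {w : V // w ≠ v} => G.Adj v u), #(availColors₀ G v u c₀) := by
  rw [coloringsExtending_eq_image hG hc₀, card_image_of_injective _ extendToNeighbors_injective,
    Fintype.card_piFinset]
  exact (prod_subtype _ mem_filter_univ fun u : {w : V // w ≠ v} =>
    #(availColors₀ G v u c₀)).symm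

theorem filter_agreeOnNeighbors_eq (f : V → Fin k) :
    (coloringsExtending G v c₀).filter
        (fun c => ∀ (u : V) (h1 : u ≠ v), G.Adj v u → c ⟨u, h1⟩ = f u) =
      (coloringsExtending G v c₀).filter (· = extendToNeighbors G c₀ fun u => f u) := by
  refine filter_congr fun c hc => ?_
  conv_rhs => rw [eq_extendToNeighbors_of_mem hc, extendToNeighbors_injective.eq_iff, funext_iff]
  simp only [Subtype.forall]

theorem card_filter_agreeOnNeighbors (hG : G.CliqueFree 3)
    (hc₀ : c₀ ∈ properColorings (deleteClosedNbhd G v) k) (f : V → Fin k) :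
    #((coloringsExtending G v c₀).filter
        (fun c => ∀ (u : V) (h1 : u ≠ v), G.Adj v u → c ⟨u, h1⟩ = f u)) =
      if ∀ u : {w : V // w ≠ v}, G.Adj v u → f u ∈ availColors₀ G v u c₀ then 1 else 0 := by
  rw [filter_agreeOnNeighbors_eq, filter_eq', apply_ite card, card_singleton, card_empty]
  simp only [extendToNeighbors_mem_iff hG hc₀, Subtype.forall]

end Extension

theorem conditional_law_of_neighbors_general {V : Type} [Fintype V] [DecidableEq V]
    (G : SimpleGraph V) [DecidableRel G.Adj] (hG : G.CliqueFree 3) (v : V) (k : ℕ)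
    (c₀ : {w : V // w ≠ v ∧ ¬G.Adj v w} → Fin k)
    (hc₀ : c₀ ∈ properColorings (deleteClosedNbhd G v) k)
    (f : V → Fin k) :
    (((properColorings (deleteVertex G v) k).filter
        (fun c => (∀ (w : V) (h1 : w ≠ v) (h2 : ¬G.Adj v w), c ⟨w, h1⟩ = c₀ ⟨w, h1, h2⟩) ∧
          ∀ (u : V) (h1 : u ≠ v), G.Adj v u → c ⟨u, h1⟩ = f u)).card : ℝ) /
      (((properColorings (deleteVertex G v) k).filter
        (fun c => ∀ (w : V) (h1 : w ≠ v) (h2 : ¬G.Adj v w),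
          c ⟨w, h1⟩ = c₀ ⟨w, h1, h2⟩)).card : ℝ) =
    ∏ u ∈ Finset.univ.filter (fun u : {w : V // w ≠ v} => G.Adj v u),
      (if f u ∈ availColors₀ G v (u : V) c₀
        then (1 : ℝ) / ((availColors₀ G v (u : V) c₀).card : ℝ) else 0) := by
  rw [← filter_filter]
  change (#((coloringsExtending G v c₀).filter _) : ℝ) / #(coloringsExtending G v c₀) = _
  rw [card_filter_agreeOnNeighbors hG hc₀, card_coloringsExtending hG hc₀,
    ← ite_forall_div_prod_eq_prod_ite]
  push_cast
  simp only [mem_filter_univ]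

/-- Conditioned on the restriction to `G₀` being `c₀`, the colors of the neighbors of `v`
are independent, each uniform on its list of available colors. -/
theorem conditional_law_of_neighbors {V : Type} [Fintype V] [DecidableEq V]
    (G : SimpleGraph V) [DecidableRel G.Adj] (hG : G.CliqueFree 3) (v : V) (k : ℕ)
    (c₀ : {w : V // w ≠ v ∧ ¬G.Adj v w} → Fin k)
    (hc₀ : c₀ ∈ properColorings (deleteClosedNbhd G v) k)
    (hne : ((properColorings (deleteVertex G v) k).filter
      (fun c => ∀ (w : V) (h1 : w ≠ v) (h2 : ¬G.Adj v w),
        c ⟨w, h1⟩ = c₀ ⟨w, h1, h2⟩)).Nonempty)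
    (f : V → Fin k) :
    (((properColorings (deleteVertex G v) k).filter
        (fun c => (∀ (w : V) (h1 : w ≠ v) (h2 : ¬G.Adj v w), c ⟨w, h1⟩ = c₀ ⟨w, h1, h2⟩) ∧
          ∀ (u : V) (h1 : u ≠ v), G.Adj v u → c ⟨u, h1⟩ = f u)).card : ℝ) /
      (((properColorings (deleteVertex G v) k).filter
        (fun c => ∀ (w : V) (h1 : w ≠ v) (h2 : ¬G.Adj v w),
          c ⟨w, h1⟩ = c₀ ⟨w, h1, h2⟩)).card : ℝ) =
    ∏ u ∈ Finset.univ.filter (fun u : {w : V // w ≠ v} => G.Adj v u),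
      (if f u ∈ availColors₀ G v (u : V) c₀
        then (1 : ℝ) / ((availColors₀ G v (u : V) c₀).card : ℝ) else 0) :=
  conditional_law_of_neighbors_general G hG v k c₀ hc₀ f
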